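/- Under hypothesis (G) on g with h = b/K: the map G : C¹([-h,0],I) × C¹([0,h],J) → C¹([0,h],ℝ) defined by G(ψ,y)(t) = y(t) + ∫_0^t g(y(s),ψ(−s)) ds is continuously Fréchet differentiable, with partial derivatives ∂₁G(ψ,y)χ(t) = ∫_0^t ∂₂g(y(s),ψ(−s)) χ(−s) ds and ∂₂G(ψ,y)u(t) = u(t) + ∫_0^t ∂₁g(y(s),ψ(−s)) u(s) ds. -/

import Mathlib

open Set

noncomputable def supN {X : Type*} [NormedAddCommGroup X] (a b : ℝ) (f : ℝ → X) : ℝ :=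
  ⨆ t : Set.Icc a b, ‖f t.1‖

def C1on {X : Type*} [NormedAddCommGroup X] [NormedSpace ℝ X] (a b : ℝ) (f : ℝ → X) : Prop :=
  ContinuousOn f (Set.Icc a b) ∧ (∀ t ∈ Set.Icc a b, DifferentiableWithinAt ℝ f (Set.Icc a b) t) ∧
    ContinuousOn (derivWithin f (Set.Icc a b)) (Set.Icc a b)

noncomputable def nC1 {X : Type*} [NormedAddCommGroup X] [NormedSpace ℝ X] (a b : ℝ) (f : ℝ → X) : ℝ :=
  supN a b f + supN a b (derivWithin f (Set.Icc a b))

/-- Partial derivative in the first argument. -/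
noncomputable def p1 (k : ℝ → ℝ → ℝ) (x y : ℝ) : ℝ := deriv (fun x' => k x' y) x

/-- Partial derivative in the second argument. -/
noncomputable def p2 (k : ℝ → ℝ → ℝ) (x y : ℝ) : ℝ := deriv (fun y' => k x y') y

/-- G(ψ,y)(t) = y(t) + ∫₀ᵗ g(y(s),ψ(-s)) ds. -/
noncomputable def Gmap (g : ℝ → ℝ → ℝ) (ψ y : ℝ → ℝ) : ℝ → ℝ :=
  fun t => y t + ∫ s in (0:ℝ)..t, g (y s) (ψ (-s))

/-- ∂₁G(ψ,y)χ(t) = ∫₀ᵗ ∂₂g(y(s),ψ(-s)) χ(-s) ds. -/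
noncomputable def D1G (g : ℝ → ℝ → ℝ) (ψ y χ : ℝ → ℝ) : ℝ → ℝ :=
  fun t => ∫ s in (0:ℝ)..t, p2 g (y s) (ψ (-s)) * χ (-s)

/-- ∂₂G(ψ,y)u(t) = u(t) + ∫₀ᵗ ∂₁g(y(s),ψ(-s)) u(s) ds. -/
noncomputable def D2G (g : ℝ → ℝ → ℝ) (ψ y u : ℝ → ℝ) : ℝ → ℝ :=
  fun t => u t + ∫ s in (0:ℝ)..t, p1 g (y s) (ψ (-s)) * u s

/-- Membership in C¹([-h,0],I) × C¹([0,h],J). -/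
def DomG (J I : Set ℝ) (h : ℝ) (ψ y : ℝ → ℝ) : Prop :=
  C1on (-h) 0 ψ ∧ (∀ u ∈ Set.Icc (-h) 0, ψ u ∈ I) ∧
  C1on 0 h y ∧ (∀ u ∈ Set.Icc (0:ℝ) h, y u ∈ J)

/-!
Along the curve `s ↦ (y s, ψ (-s))`, whose image is a compact subset of the open set `J ×ˢ I`,
the derivative of `g` is uniformly continuous on a uniform neighbourhood. Hence for `(ψ', y')`
close to `(ψ, y)` in sup norm, uniformly in `s`, the partial derivatives of `g` at the two points
are close and, by the mean value inequality, the integrand of `G(ψ', y') - G(ψ, y)` differs from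
its linearization by a small multiple of the size of the perturbation. The Volterra operator
`φ ↦ ∫₀ᵗ φ` turns a sup-norm bound `C` on `φ` into the `C¹` bound `(h + 1) C`, which converts
these pointwise estimates into the remainder estimate for `G` and into the continuity of its
partial derivatives in operator norm.
-/

open MeasureTheory Metric Function

section SupNorm

variable {X : Type*} [NormedAddCommGroup X] {a b : ℝ}

lemma supN_nonneg (f : ℝ → X) : 0 ≤ supN a b f :=
  Real.iSup_nonneg fun _ => norm_nonneg _

lemma supN_le {f : ℝ → X} {C : ℝ} (hC : 0 ≤ C) (hf : ∀ t ∈ Icc a b, ‖f t‖ ≤ C) :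
    supN a b f ≤ C :=
  Real.iSup_le (fun t => hf t.1 t.2) hC

lemma norm_le_supN {f : ℝ → X} (hf : ContinuousOn f (Icc a b)) {t : ℝ} (ht : t ∈ Icc a b) :
    ‖f t‖ ≤ supN a b f := by
  obtain ⟨C, hC⟩ := isCompact_Icc.exists_bound_of_continuousOn hf
  exact le_ciSup (f := fun t : Icc a b => ‖f t.1‖)
    ⟨C, by rintro _ ⟨⟨s, hs⟩, rfl⟩; exact hC s hs⟩ ⟨t, ht⟩

end SupNorm

lemma ContinuousOn.intervalIntegrable_of_mem_Icc {E : Type*} [NormedAddCommGroup E] {f : ℝ → E}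
    {a b t : ℝ} (hf : ContinuousOn f (Icc a b)) (ht : t ∈ Icc a b) :
    IntervalIntegrable f volume a t :=
  (hf.mono (Icc_subset_Icc le_rfl ht.2)).intervalIntegrable_of_Icc ht.1

section C1Norm

variable {X : Type*} [NormedAddCommGroup X] [NormedSpace ℝ X] {a b : ℝ}

lemma nC1_nonneg (f : ℝ → X) : 0 ≤ nC1 a b f :=
  add_nonneg (supN_nonneg f) (supN_nonneg _)

lemma norm_le_nC1 {f : ℝ → X} (hf : ContinuousOn f (Icc a b)) {t : ℝ} (ht : t ∈ Icc a b) :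
    ‖f t‖ ≤ nC1 a b f :=
  (norm_le_supN hf ht).trans (le_add_of_nonneg_right (supN_nonneg _))

lemma nC1_congr {f g : ℝ → X} (hfg : EqOn f g (Icc a b)) : nC1 a b f = nC1 a b g := by
  unfold nC1 supN
  congr 1
  · exact iSup_congr fun t => by rw [hfg t.2]
  · exact iSup_congr fun t => by rw [derivWithin_congr hfg (hfg t.2)]

lemma nC1_integral_le [CompleteSpace X] (hab : a < b) {φ : ℝ → X}
    (hφ : ContinuousOn φ (Icc a b)) {C : ℝ} (hC : ∀ s ∈ Icc a b, ‖φ s‖ ≤ C) :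
    nC1 a b (fun t => ∫ s in a..t, φ s) ≤ (b - a + 1) * C := by
  have hC0 : 0 ≤ C := (norm_nonneg _).trans (hC a (left_mem_Icc.2 hab.le))
  have hvalue : ∀ t ∈ Icc a b, ‖∫ s in a..t, φ s‖ ≤ (b - a) * C := fun t ht =>
    calc ‖∫ s in a..t, φ s‖ ≤ C * |t - a| :=
          intervalIntegral.norm_integral_le_of_norm_le_const fun s hs => by
            rw [uIoc_of_le ht.1] at hs
            exact hC s ⟨hs.1.le, hs.2.trans ht.2⟩
      _ ≤ (b - a) * C := by
          rw [abs_of_nonneg (sub_nonneg.2 ht.1), mul_comm]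
          gcongr
          exact ht.2
  have hderiv : ∀ t ∈ Icc a b, ‖derivWithin (fun t => ∫ s in a..t, φ s) (Icc a b) t‖ ≤ C := by
    intro t ht
    have : Fact (t ∈ Icc a b) := ⟨ht⟩
    rw [intervalIntegral.derivWithin_integral_right (hφ.intervalIntegrable_of_mem_Icc ht)
      (hφ.stronglyMeasurableAtFilter_nhdsWithin measurableSet_Icc t) (hφ t ht)
      (uniqueDiffOn_Icc hab t ht)]
    exact hC t ht
  calc nC1 a b (fun t => ∫ s in a..t, φ s) ≤ (b - a) * C + C :=
        add_le_add (supN_le (by nlinarith) hvalue) (supN_le hC0 hderiv)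
    _ = (b - a + 1) * C := by ring

end C1Norm

lemma IsCompact.exists_forall_dist_lt_of_continuousOn {α β : Type*} [PseudoMetricSpace α]
    [PseudoMetricSpace β] {K U : Set α} {F : α → β} (hK : IsCompact K) (hU : IsOpen U)
    (hKU : K ⊆ U) (hF : ContinuousOn F U) {ε : ℝ} (hε : 0 < ε) :
    ∃ δ > 0, ∀ p ∈ K, ∀ q, dist q p ≤ δ → q ∈ U ∧ dist (F q) (F p) < ε := by
  obtain ⟨r, hr, hrU⟩ := hK.exists_thickening_subset_open hU hKU
  obtain ⟨ρ, hρ, hρF⟩ := Metric.mem_uniformity_dist.1 <| hK.uniformContinuousAt_of_continuousAt F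
    (fun p hp => hF.continuousAt (hU.mem_nhds (hKU hp))) (Metric.dist_mem_uniformity hε)
  refine ⟨min (r / 2) (ρ / 2), by positivity, fun p hp q hq => ⟨hrU ?_, ?_⟩⟩
  · exact mem_thickening_iff.2 ⟨p, hp, by linarith [min_le_left (r / 2) (ρ / 2)]⟩
  · rw [dist_comm]
    exact hρF (by rw [dist_comm]; linarith [min_le_right (r / 2) (ρ / 2)]) hp

lemma ContDiffOn.exists_uniform_taylor_bound {E F : Type*} [NormedAddCommGroup E]
    [NormedSpace ℝ E] [NormedAddCommGroup F] [NormedSpace ℝ F] {f : E → F} {K U : Set E}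
    (hf : ContDiffOn ℝ 1 f U) (hU : IsOpen U) (hK : IsCompact K) (hKU : K ⊆ U) {ε : ℝ}
    (hε : 0 < ε) :
    ∃ δ > 0, ∀ p ∈ K, ∀ q, ‖q - p‖ ≤ δ → q ∈ U ∧ ‖fderiv ℝ f q - fderiv ℝ f p‖ ≤ ε ∧
      ‖f q - f p - fderiv ℝ f p (q - p)‖ ≤ ε * ‖q - p‖ := by
  obtain ⟨δ, hδ, hclose⟩ :=
    hK.exists_forall_dist_lt_of_continuousOn hU hKU (hf.continuousOn_fderiv_of_isOpen hU le_rfl) hε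
  have hball : ∀ p ∈ K, ∀ z, ‖z - p‖ ≤ δ → z ∈ U ∧ ‖fderiv ℝ f z - fderiv ℝ f p‖ ≤ ε := by
    intro p hp z hz
    rw [← dist_eq_norm] at hz ⊢
    exact ⟨(hclose p hp z hz).1, (hclose p hp z hz).2.le⟩
  refine ⟨δ, hδ, fun p hp q hq => ⟨(hball p hp q hq).1, (hball p hp q hq).2, ?_⟩⟩
  have hseg : ∀ z ∈ segment ℝ p q, ‖z - p‖ ≤ δ := fun z hz => by
    rw [← dist_eq_norm, ← mem_closedBall]
    exact (convex_closedBall p δ).segment_subset (mem_closedBall_self hδ.le)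
      (mem_closedBall_iff_norm.2 hq) hz
  exact (convex_segment p q).norm_image_sub_le_of_norm_hasFDerivWithin_le'
    (fun z hz => ((hf.contDiffAt (hU.mem_nhds (hball p hp z (hseg z hz)).1)).differentiableAt
      one_ne_zero).hasFDerivAt.hasFDerivWithinAt)
    (fun z hz => (hball p hp z (hseg z hz)).2) (left_mem_segment ℝ p q) (right_mem_segment ℝ p q)

section PartialDeriv

variable {g : ℝ → ℝ → ℝ} {x v : ℝ}

lemma p1_eq_fderiv (hg : DifferentiableAt ℝ (uncurry g) (x, v)) :
    p1 g x v = fderiv ℝ (uncurry g) (x, v) (1, 0) := by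
  have := hg.hasFDerivAt.comp_hasDerivAt x ((hasDerivAt_id x).prodMk (hasDerivAt_const x v))
  exact this.deriv

lemma p2_eq_fderiv (hg : DifferentiableAt ℝ (uncurry g) (x, v)) :
    p2 g x v = fderiv ℝ (uncurry g) (x, v) (0, 1) := by
  have := hg.hasFDerivAt.comp_hasDerivAt v ((hasDerivAt_const v x).prodMk (hasDerivAt_id v))
  exact this.deriv

lemma fderiv_uncurry_apply (hg : DifferentiableAt ℝ (uncurry g) (x, v)) (w : ℝ × ℝ) :
    fderiv ℝ (uncurry g) (x, v) w = p1 g x v * w.1 + p2 g x v * w.2 := by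
  have hw : w = w.1 • ((1 : ℝ), (0 : ℝ)) + w.2 • ((0 : ℝ), (1 : ℝ)) := by ext <;> simp
  rw [p1_eq_fderiv hg, p2_eq_fderiv hg]
  conv_lhs => rw [hw]
  rw [map_add, map_smul, map_smul, smul_eq_mul, smul_eq_mul]
  ring

lemma abs_p1_sub_p1_le {x' v' : ℝ} (hg : DifferentiableAt ℝ (uncurry g) (x, v))
    (hg' : DifferentiableAt ℝ (uncurry g) (x', v')) :
    |p1 g x' v' - p1 g x v| ≤ ‖fderiv ℝ (uncurry g) (x', v') - fderiv ℝ (uncurry g) (x, v)‖ := by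
  rw [p1_eq_fderiv hg, p1_eq_fderiv hg', ← Real.norm_eq_abs, ← sub_apply]
  simpa using
    (fderiv ℝ (uncurry g) (x', v') - fderiv ℝ (uncurry g) (x, v)).le_opNorm ((1 : ℝ), (0 : ℝ))

lemma abs_p2_sub_p2_le {x' v' : ℝ} (hg : DifferentiableAt ℝ (uncurry g) (x, v))
    (hg' : DifferentiableAt ℝ (uncurry g) (x', v')) :
    |p2 g x' v' - p2 g x v| ≤ ‖fderiv ℝ (uncurry g) (x', v') - fderiv ℝ (uncurry g) (x, v)‖ := by
  rw [p2_eq_fderiv hg, p2_eq_fderiv hg', ← Real.norm_eq_abs, ← sub_apply]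
  simpa using
    (fderiv ℝ (uncurry g) (x', v') - fderiv ℝ (uncurry g) (x, v)).le_opNorm ((0 : ℝ), (1 : ℝ))

variable {U : Set (ℝ × ℝ)}

lemma ContDiffOn.continuousOn_p1 (hU : IsOpen U) (hg : ContDiffOn ℝ 1 (uncurry g) U) :
    ContinuousOn (uncurry (p1 g)) U :=
  ((hg.continuousOn_fderiv_of_isOpen hU le_rfl).clm_apply continuousOn_const).congr fun _ hp =>
    p1_eq_fderiv ((hg.contDiffAt (hU.mem_nhds hp)).differentiableAt one_ne_zero)

lemma ContDiffOn.continuousOn_p2 (hU : IsOpen U) (hg : ContDiffOn ℝ 1 (uncurry g) U) :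
    ContinuousOn (uncurry (p2 g)) U :=
  ((hg.continuousOn_fderiv_of_isOpen hU le_rfl).clm_apply continuousOn_const).congr fun _ hp =>
    p2_eq_fderiv ((hg.contDiffAt (hU.mem_nhds hp)).differentiableAt one_ne_zero)

end PartialDeriv

section Domain

variable {I J : Set ℝ} {h : ℝ} {ψ y ψ' y' : ℝ → ℝ}

lemma mapsTo_neg_Icc : MapsTo Neg.neg (Icc 0 h) (Icc (-h) 0) :=
  fun _ hs => ⟨neg_le_neg hs.2, neg_nonpos.2 hs.1⟩

lemma ContinuousOn.comp_neg_Icc {f : ℝ → ℝ} (hf : ContinuousOn f (Icc (-h) 0)) :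
    ContinuousOn (fun s => f (-s)) (Icc 0 h) :=
  hf.comp continuous_neg.continuousOn mapsTo_neg_Icc

lemma DomG.mapsTo (hd : DomG J I h ψ y) : MapsTo (fun s => (y s, ψ (-s))) (Icc 0 h) (J ×ˢ I) :=
  fun s hs => ⟨hd.2.2.2 s hs, hd.2.1 (-s) (mapsTo_neg_Icc hs)⟩

lemma DomG.continuousOn (hd : DomG J I h ψ y) : ContinuousOn (fun s => (y s, ψ (-s))) (Icc 0 h) :=
  hd.2.2.1.1.prodMk hd.1.1.comp_neg_Icc

lemma DomG.norm_sub_le (hd : DomG J I h ψ y) (hd' : DomG J I h ψ' y') {s : ℝ} (hs : s ∈ Icc 0 h) :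
    ‖(y' s, ψ' (-s)) - (y s, ψ (-s))‖ ≤ max (nC1 0 h (y' - y)) (nC1 (-h) 0 (ψ' - ψ)) :=
  max_le_max (norm_le_nC1 (hd'.2.2.1.1.sub hd.2.2.1.1) hs)
    (norm_le_nC1 (hd'.1.1.sub hd.1.1) (mapsTo_neg_Icc hs))

variable {g : ℝ → ℝ → ℝ}

lemma DomG.exists_pointwise_bounds (hI : IsOpen I) (hJ : IsOpen J)
    (hg : ContDiffOn ℝ 1 (uncurry g) (J ×ˢ I)) (hd : DomG J I h ψ y) {η : ℝ} (hη : 0 < η) :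
    ∃ δ > 0, ∀ ψ' y', DomG J I h ψ' y' → nC1 (-h) 0 (ψ' - ψ) ≤ δ → nC1 0 h (y' - y) ≤ δ →
      ∀ s ∈ Icc 0 h,
        |p1 g (y' s) (ψ' (-s)) - p1 g (y s) (ψ (-s))| ≤ η ∧
        |p2 g (y' s) (ψ' (-s)) - p2 g (y s) (ψ (-s))| ≤ η ∧
        |g (y' s) (ψ' (-s)) - g (y s) (ψ (-s)) - p2 g (y s) (ψ (-s)) * (ψ' - ψ) (-s)
            - p1 g (y s) (ψ (-s)) * (y' - y) s|
          ≤ η * (nC1 (-h) 0 (ψ' - ψ) + nC1 0 h (y' - y)) := by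
  have hU := hJ.prod hI
  have hdiff : ∀ {ψ y}, DomG J I h ψ y → ∀ s ∈ Icc 0 h,
      DifferentiableAt ℝ (uncurry g) (y s, ψ (-s)) := fun hd s hs =>
    (hg.contDiffAt (hU.mem_nhds (hd.mapsTo hs))).differentiableAt one_ne_zero
  obtain ⟨δ, hδ, hclose⟩ := hg.exists_uniform_taylor_bound hU
    (isCompact_Icc.image_of_continuousOn hd.continuousOn) hd.mapsTo.image_subset hη
  refine ⟨δ, hδ, fun ψ' y' hd' hψ hy s hs => ?_⟩
  have hΔ := hd.norm_sub_le hd' hs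
  obtain ⟨-, hderiv, hrem⟩ := hclose _ (mem_image_of_mem _ hs) _ (hΔ.trans (max_le hy hψ))
  refine ⟨(abs_p1_sub_p1_le (hdiff hd s hs) (hdiff hd' s hs)).trans hderiv,
    (abs_p2_sub_p2_le (hdiff hd s hs) (hdiff hd' s hs)).trans hderiv, ?_⟩
  rw [fderiv_uncurry_apply (hdiff hd s hs)] at hrem
  calc _ = ‖uncurry g (y' s, ψ' (-s)) - uncurry g (y s, ψ (-s))
          - (p1 g (y s) (ψ (-s)) * ((y' s, ψ' (-s)) - (y s, ψ (-s))).1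
            + p2 g (y s) (ψ (-s)) * ((y' s, ψ' (-s)) - (y s, ψ (-s))).2)‖ := by
        rw [Real.norm_eq_abs]
        congr 1
        simp only [uncurry_apply_pair, Pi.sub_apply, Prod.fst_sub, Prod.snd_sub]
        ring
    _ ≤ η * ‖(y' s, ψ' (-s)) - (y s, ψ (-s))‖ := hrem
    _ ≤ η * (nC1 (-h) 0 (ψ' - ψ) + nC1 0 h (y' - y)) := by
        gcongr
        exact hΔ.trans <|
          (max_le_add_of_nonneg (nC1_nonneg _) (nC1_nonneg _)).trans_eq (add_comm _ _)

end Domain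

lemma nC1_integral_mul_sub_le {a b : ℝ} (hab : a < b) {m m' w : ℝ → ℝ}
    (hm : ContinuousOn m (Icc a b)) (hm' : ContinuousOn m' (Icc a b))
    (hw : ContinuousOn w (Icc a b)) {η W : ℝ} (hη : ∀ s ∈ Icc a b, |m' s - m s| ≤ η)
    (hW : ∀ s ∈ Icc a b, |w s| ≤ W) :
    nC1 a b (fun t => (∫ s in a..t, m' s * w s) - ∫ s in a..t, m s * w s) ≤
      (b - a + 1) * (η * W) := by
  rw [nC1_congr (g := fun t => ∫ s in a..t, (m' s - m s) * w s) fun t ht => by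
    simp only [sub_mul]
    exact (intervalIntegral.integral_sub ((hm'.mul hw).intervalIntegrable_of_mem_Icc ht)
      ((hm.mul hw).intervalIntegrable_of_mem_Icc ht)).symm]
  refine nC1_integral_le hab ((hm'.sub hm).mul hw) fun s hs => ?_
  rw [Pi.mul_apply, Pi.sub_apply, Real.norm_eq_abs, abs_mul]
  exact mul_le_mul (hη s hs) (hW s hs) (abs_nonneg _) ((abs_nonneg _).trans (hη s hs))

section Differentiability

variable {I J : Set ℝ} {g : ℝ → ℝ → ℝ} {h : ℝ} {ψ y : ℝ → ℝ}

theorem exists_nC1_Gmap_remainder_le (hI : IsOpen I) (hJ : IsOpen J)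
    (hg : ContDiffOn ℝ 1 (uncurry g) (J ×ˢ I)) (hh : 0 < h) (hd : DomG J I h ψ y) {ε : ℝ}
    (hε : 0 < ε) :
    ∃ δ > 0, ∀ ψ' y', DomG J I h ψ' y' → nC1 (-h) 0 (ψ' - ψ) ≤ δ → nC1 0 h (y' - y) ≤ δ →
      nC1 0 h (Gmap g ψ' y' - Gmap g ψ y - D1G g ψ y (ψ' - ψ) - D2G g ψ y (y' - y)) ≤
        ε * (nC1 (-h) 0 (ψ' - ψ) + nC1 0 h (y' - y)) := by
  have hU := hJ.prod hI
  obtain ⟨δ, hδ, hbound⟩ :=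
    hd.exists_pointwise_bounds hI hJ hg (div_pos hε (by linarith : 0 < h + 1))
  refine ⟨δ, hδ, fun ψ' y' hd' hψ hy => ?_⟩
  have hgc : ∀ {ψ y}, DomG J I h ψ y → ContinuousOn (fun s => g (y s) (ψ (-s))) (Icc 0 h) :=
    fun hd => hg.continuousOn.comp hd.continuousOn hd.mapsTo
  have hp1 := (hg.continuousOn_p1 hU).comp hd.continuousOn hd.mapsTo
  have hp2 := (hg.continuousOn_p2 hU).comp hd.continuousOn hd.mapsTo
  have hΔψ := (hd'.1.1.sub hd.1.1).comp_neg_Icc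
  have hΔy := hd'.2.2.1.1.sub hd.2.2.1.1
  set R : ℝ → ℝ := fun s => g (y' s) (ψ' (-s)) - g (y s) (ψ (-s))
    - p2 g (y s) (ψ (-s)) * (ψ' - ψ) (-s) - p1 g (y s) (ψ (-s)) * (y' - y) s with hR
  have hRc : ContinuousOn R (Icc 0 h) :=
    (((hgc hd').sub (hgc hd)).sub (hp2.mul hΔψ)).sub (hp1.mul hΔy)
  calc _ = nC1 0 h (fun t => ∫ s in (0 : ℝ)..t, R s) := by
        refine nC1_congr fun t ht => ?_
        have hA := (hgc hd').intervalIntegrable_of_mem_Icc ht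
        have hB := (hgc hd).intervalIntegrable_of_mem_Icc ht
        have hC :
            IntervalIntegrable (fun s => p2 g (y s) (ψ (-s)) * (ψ' (-s) - ψ (-s))) volume 0 t :=
          (hp2.mul hΔψ).intervalIntegrable_of_mem_Icc ht
        have hD : IntervalIntegrable (fun s => p1 g (y s) (ψ (-s)) * (y' s - y s)) volume 0 t :=
          (hp1.mul hΔy).intervalIntegrable_of_mem_Icc ht
        simp only [Pi.sub_apply, Gmap, D1G, D2G, hR]
        rw [intervalIntegral.integral_sub ((hA.sub hB).sub hC) hD,
          intervalIntegral.integral_sub (hA.sub hB) hC, intervalIntegral.integral_sub hA hB]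
        ring
    _ ≤ (h + 1) * (ε / (h + 1) * (nC1 (-h) 0 (ψ' - ψ) + nC1 0 h (y' - y))) := by
        simpa only [sub_zero] using
          nC1_integral_le hh hRc fun s hs => (hbound ψ' y' hd' hψ hy s hs).2.2
    _ = ε * (nC1 (-h) 0 (ψ' - ψ) + nC1 0 h (y' - y)) := by
        rw [← mul_assoc, mul_div_cancel₀ _ (by linarith)]

theorem exists_nC1_D1G_D2G_sub_le (hI : IsOpen I) (hJ : IsOpen J)
    (hg : ContDiffOn ℝ 1 (uncurry g) (J ×ˢ I)) (hh : 0 < h) (hd : DomG J I h ψ y) {ε : ℝ}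
    (hε : 0 < ε) :
    ∃ δ > 0, ∀ ψ' y', DomG J I h ψ' y' → nC1 (-h) 0 (ψ' - ψ) ≤ δ → nC1 0 h (y' - y) ≤ δ →
      ∀ χ u : ℝ → ℝ, ContinuousOn χ (Icc (-h) 0) → ContinuousOn u (Icc 0 h) →
        nC1 0 h (D1G g ψ' y' χ - D1G g ψ y χ) + nC1 0 h (D2G g ψ' y' u - D2G g ψ y u) ≤
          ε * (nC1 (-h) 0 χ + nC1 0 h u) := by
  have hU := hJ.prod hI
  obtain ⟨δ, hδ, hbound⟩ :=
    hd.exists_pointwise_bounds hI hJ hg (div_pos hε (by linarith : 0 < h + 1))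
  refine ⟨δ, hδ, fun ψ' y' hd' hψ hy χ u hχ hu => ?_⟩
  have hD1G := nC1_integral_mul_sub_le hh ((hg.continuousOn_p2 hU).comp hd.continuousOn hd.mapsTo)
    ((hg.continuousOn_p2 hU).comp hd'.continuousOn hd'.mapsTo) hχ.comp_neg_Icc
    (fun s hs => (hbound ψ' y' hd' hψ hy s hs).2.1)
    (fun s hs => (Real.norm_eq_abs _).symm.trans_le (norm_le_nC1 hχ (mapsTo_neg_Icc hs)))
  have hD2G := nC1_integral_mul_sub_le hh ((hg.continuousOn_p1 hU).comp hd.continuousOn hd.mapsTo)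
    ((hg.continuousOn_p1 hU).comp hd'.continuousOn hd'.mapsTo) hu
    (fun s hs => (hbound ψ' y' hd' hψ hy s hs).1)
    (fun s hs => (Real.norm_eq_abs _).symm.trans_le (norm_le_nC1 hu hs))
  rw [sub_zero] at hD1G hD2G
  calc _ ≤ (h + 1) * (ε / (h + 1) * nC1 (-h) 0 χ) + (h + 1) * (ε / (h + 1) * nC1 0 h u) := by
        refine add_le_add hD1G (le_of_eq_of_le (nC1_congr fun t _ => ?_) hD2G)
        simp only [D2G, Pi.sub_apply, add_sub_add_left_eq_sub]
        rfl
    _ = ε * (nC1 (-h) 0 χ + nC1 0 h u) := by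
        field_simp

end Differentiability

theorem stmt11_general (I J : Set ℝ) (hIo : IsOpen I)
    (hJo : IsOpen J)
    (b K : ℝ) (hb : 0 < b) (hK : 0 < K)
    (g : ℝ → ℝ → ℝ)
    (hg : ContDiffOn ℝ 1 (fun p : ℝ × ℝ => g p.1 p.2) (J ×ˢ I)) :
    (∀ ψ y : ℝ → ℝ, DomG J I (b/K) ψ y →
      ∀ ε' > 0, ∃ δ > 0, ∀ ψ' y' : ℝ → ℝ, DomG J I (b/K) ψ' y' →
        nC1 (-(b/K)) 0 (ψ' - ψ) ≤ δ → nC1 0 (b/K) (y' - y) ≤ δ →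
        nC1 0 (b/K) (Gmap g ψ' y' - Gmap g ψ y - D1G g ψ y (ψ' - ψ) - D2G g ψ y (y' - y)) ≤
          ε' * (nC1 (-(b/K)) 0 (ψ' - ψ) + nC1 0 (b/K) (y' - y))) ∧
    (∀ ψ y : ℝ → ℝ, DomG J I (b/K) ψ y →
      ∀ ε' > 0, ∃ δ > 0, ∀ ψ' y' : ℝ → ℝ, DomG J I (b/K) ψ' y' →
        nC1 (-(b/K)) 0 (ψ' - ψ) ≤ δ → nC1 0 (b/K) (y' - y) ≤ δ →
        ∀ χ u : ℝ → ℝ, C1on (-(b/K)) 0 χ → C1on 0 (b/K) u →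
          nC1 0 (b/K) (D1G g ψ' y' χ - D1G g ψ y χ) +
            nC1 0 (b/K) (D2G g ψ' y' u - D2G g ψ y u) ≤
            ε' * (nC1 (-(b/K)) 0 χ + nC1 0 (b/K) u)) := by
  have hh : 0 < b / K := div_pos hb hK
  refine ⟨fun ψ y hd ε hε => exists_nC1_Gmap_remainder_le hIo hJo hg hh hd hε,
    fun ψ y hd ε hε => ?_⟩
  obtain ⟨δ, hδ, hsmall⟩ := exists_nC1_D1G_D2G_sub_le hIo hJo hg hh hd hε
  exact ⟨δ, hδ, fun ψ' y' hd' hψ hy χ u hχ hu => hsmall ψ' y' hd' hψ hy χ u hχ.1 hu.1⟩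

/-- under hypothesis (G) with h = b/K, the map G is continuously Fréchet
differentiable with the stated partial derivatives. -/
theorem stmt11 (I J : Set ℝ) (hIo : IsOpen I) (hIne : I.Nonempty)
    (hJo : IsOpen J) (hJc : J.OrdConnected)
    (x₁ x₂ b K ε : ℝ) (hb : 0 < b) (hK : 0 < K) (hε : 0 < ε)
    (g : ℝ → ℝ → ℝ)
    (hsub : Metric.closedBall x₂ b ⊆ J)
    (hg : ContDiffOn ℝ 1 (fun p : ℝ × ℝ => g p.1 p.2) (J ×ˢ I))
    (hg2 : ∀ x ∈ Metric.closedBall x₂ b, ∀ y ∈ I, |p1 g x y| < K / b)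
    (hg3 : ∀ x ∈ Metric.closedBall x₂ b, ∀ y ∈ I, ε ≤ g x y ∧ g x y ≤ K)
    (hx : x₂ - x₁ ∈ Set.Ioo 0 ((b / K) * ε)) :
    (∀ ψ y : ℝ → ℝ, DomG J I (b/K) ψ y →
      ∀ ε' > 0, ∃ δ > 0, ∀ ψ' y' : ℝ → ℝ, DomG J I (b/K) ψ' y' →
        nC1 (-(b/K)) 0 (ψ' - ψ) ≤ δ → nC1 0 (b/K) (y' - y) ≤ δ →
        nC1 0 (b/K) (Gmap g ψ' y' - Gmap g ψ y - D1G g ψ y (ψ' - ψ) - D2G g ψ y (y' - y)) ≤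
          ε' * (nC1 (-(b/K)) 0 (ψ' - ψ) + nC1 0 (b/K) (y' - y))) ∧
    (∀ ψ y : ℝ → ℝ, DomG J I (b/K) ψ y →
      ∀ ε' > 0, ∃ δ > 0, ∀ ψ' y' : ℝ → ℝ, DomG J I (b/K) ψ' y' →
        nC1 (-(b/K)) 0 (ψ' - ψ) ≤ δ → nC1 0 (b/K) (y' - y) ≤ δ →
        ∀ χ u : ℝ → ℝ, C1on (-(b/K)) 0 χ → C1on 0 (b/K) u →
          nC1 0 (b/K) (D1G g ψ' y' χ - D1G g ψ y χ) +
            nC1 0 (b/K) (D2G g ψ' y' u - D2G g ψ y u) ≤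
            ε' * (nC1 (-(b/K)) 0 χ + nC1 0 (b/K) u)) :=
  stmt11_general I J hIo hJo b K hb hK g hg
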